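/- Let k be a natural number and let R be an ℕ^k-graded ring with grading 𝒜 : (Fin k → ℕ) → AddSubgroup R. Let A be a right ideal of R whose right annihilator A^r is non-zero. Then A^r contains a non-trivial graded (two-sided) ideal of R: there is a two-sided ideal I ≠ {0} of R with I ⊆ A^r such that for every z ∈ I all homogeneous components of z again lie in I. -/
import Mathlib

open scoped Classical

namespace AnnGradedAux

open DirectSum Finset

variable {k : ℕ} {R : Type*} [Ring R] (𝒜 : (Fin k → ℕ) → AddSubgroup R) [GradedRing 𝒜]

/-- The degree-`v` homogeneous component of `z`, as an element of `R`. -/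
noncomputable def dC (z : R) (v : Fin k → ℕ) : R := (DirectSum.decompose 𝒜 z v : R)

/-- The component map as an additive monoid hom. -/
noncomputable def cHom (w : Fin k → ℕ) : R →+ R where
  toFun z := dC 𝒜 z w
  map_zero' := by simp [dC]
  map_add' x y := by simp [dC]

/-- The support of the decomposition of `z`. -/
noncomputable def sup (z : R) : Finset (Fin k → ℕ) := (DirectSum.decompose 𝒜 z).support

lemma dC_mem (z : R) (v : Fin k → ℕ) : dC 𝒜 z v ∈ 𝒜 v := SetLike.coe_mem _

lemma mem_sup {z : R} {v : Fin k → ℕ} : v ∈ sup 𝒜 z ↔ dC 𝒜 z v ≠ 0 := by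
  rw [sup, DFinsupp.mem_support_iff]
  constructor
  · intro h h'
    exact h (by ext; exact h')
  · intro h h'
    exact h (by rw [dC, h']; rfl)

lemma sum_sup (z : R) : ∑ v ∈ sup 𝒜 z, dC 𝒜 z v = z :=
  DirectSum.sum_support_decompose 𝒜 z

lemma dC_sum {ι : Type*} (s : Finset ι) (f : ι → R) (w : Fin k → ℕ) :
    dC 𝒜 (∑ i ∈ s, f i) w = ∑ i ∈ s, dC 𝒜 (f i) w :=
  map_sum (cHom 𝒜 w) f s

lemma dC_zero (w : Fin k → ℕ) : dC 𝒜 (0 : R) w = 0 := map_zero (cHom 𝒜 w)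

lemma dC_add (x y : R) (w : Fin k → ℕ) : dC 𝒜 (x + y) w = dC 𝒜 x w + dC 𝒜 y w :=
  map_add (cHom 𝒜 w) x y

lemma dC_neg (x : R) (w : Fin k → ℕ) : dC 𝒜 (-x) w = -dC 𝒜 x w :=
  map_neg (cHom 𝒜 w) x

lemma dC_sub (x y : R) (w : Fin k → ℕ) : dC 𝒜 (x - y) w = dC 𝒜 x w - dC 𝒜 y w :=
  map_sub (cHom 𝒜 w) x y

lemma dC_of_mem {u w : Fin k → ℕ} {x : R} (hx : x ∈ 𝒜 u) :
    dC 𝒜 x w = if u = w then x else 0 := by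
  by_cases h : u = w
  · rw [if_pos h]; subst h; exact DirectSum.decompose_of_mem_same 𝒜 hx
  · rw [if_neg h]; exact DirectSum.decompose_of_mem_ne 𝒜 hx h

lemma dC_mul_homog {u v : Fin k → ℕ} {x y : R} (hx : x ∈ 𝒜 u) (hy : y ∈ 𝒜 v)
    (w : Fin k → ℕ) : dC 𝒜 (x * y) w = if u + v = w then x * y else 0 :=
  dC_of_mem 𝒜 (SetLike.mul_mem_graded hx hy)

lemma dC_mul (z t : R) (w : Fin k → ℕ) :
    dC 𝒜 (z * t) w =
      ∑ u ∈ sup 𝒜 z, ∑ v ∈ sup 𝒜 t,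
        (if u + v = w then dC 𝒜 z u * dC 𝒜 t v else 0) := by
  conv_lhs => rw [show z * t = ∑ u ∈ sup 𝒜 z, ∑ v ∈ sup 𝒜 t, dC 𝒜 z u * dC 𝒜 t v by
    rw [← Finset.sum_mul_sum, sum_sup, sum_sup]]
  rw [dC_sum]
  refine Finset.sum_congr rfl fun u _ => ?_
  rw [dC_sum]
  exact Finset.sum_congr rfl fun v _ =>
    dC_mul_homog 𝒜 (dC_mem 𝒜 z u) (dC_mem 𝒜 t v) w

lemma dC_homog_mul {u : Fin k → ℕ} {r : R} (hr : r ∈ 𝒜 u) (t : R) (w : Fin k → ℕ) :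
    dC 𝒜 (r * t) w = ∑ v ∈ sup 𝒜 t, (if u + v = w then r * dC 𝒜 t v else 0) := by
  conv_lhs => rw [show r * t = ∑ v ∈ sup 𝒜 t, r * dC 𝒜 t v by
    rw [← Finset.mul_sum, sum_sup]]
  rw [dC_sum]
  exact Finset.sum_congr rfl fun v _ => dC_mul_homog 𝒜 hr (dC_mem 𝒜 t v) w

lemma dC_homog_mul_add {u : Fin k → ℕ} {r : R} (hr : r ∈ 𝒜 u) (t : R) (v : Fin k → ℕ) :
    dC 𝒜 (r * t) (u + v) = r * dC 𝒜 t v := by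
  rw [dC_homog_mul 𝒜 hr t (u + v)]
  have h : ∀ v' ∈ sup 𝒜 t, (if u + v' = u + v then r * dC 𝒜 t v' else 0)
      = (if v' = v then r * dC 𝒜 t v' else 0) := by
    intro v' _
    simp only [add_right_inj]
  rw [Finset.sum_congr rfl h, Finset.sum_ite_eq' (sup 𝒜 t) v (fun v' => r * dC 𝒜 t v')]
  by_cases hv : v ∈ sup 𝒜 t
  · rw [if_pos hv]
  · rw [if_neg hv]
    have : dC 𝒜 t v = 0 := by
      by_contra h'; exact hv (mem_sup 𝒜 |>.mpr h')
    rw [this, mul_zero]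

lemma exists_dC_ne_zero {z : R} (hz : z ≠ 0) : ∃ v, dC 𝒜 z v ≠ 0 := by
  by_contra h
  push_neg at h
  apply hz
  rw [← sum_sup 𝒜 z]
  exact Finset.sum_eq_zero fun v _ => h v

end AnnGradedAux

open AnnGradedAux Finset in
/-- Let `R` be an `ℕ^k`-graded ring and `A` a right ideal of `R` whose right annihilator
is non-zero.  Then the right annihilator of `A` contains a non-trivial graded two-sided
ideal of `R`. -/
theorem annihilator_contains_graded_ideal_of_nkGraded
    {k : ℕ} {R : Type*} [Ring R] (𝒜 : (Fin k → ℕ) → AddSubgroup R) [GradedRing 𝒜]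
    (A : AddSubgroup R) (hA : ∀ a ∈ A, ∀ t : R, a * t ∈ A)
    (hann : ∃ t : R, t ≠ 0 ∧ ∀ a ∈ A, a * t = 0) :
    ∃ I : AddSubgroup R,
      (∀ z ∈ I, ∀ t : R, z * t ∈ I ∧ t * z ∈ I) ∧
      I ≠ ⊥ ∧
      (∀ z ∈ I, ∀ a ∈ A, a * z = 0) ∧
      (∀ z ∈ I, ∀ v : Fin k → ℕ, (DirectSum.decompose 𝒜 z v : R) ∈ I) := by
  classical
  haveI : WellFoundedLT (Fin k) := Finite.to_wellFoundedLT
  -- the annihilator predicate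
  set P : R → Prop := fun t => ∀ a ∈ A, a * t = 0 with hP
  have Pzero : P 0 := fun a _ => mul_zero a
  have Padd : ∀ {x y}, P x → P y → P (x + y) := fun {x y} hx hy a ha => by
    rw [mul_add, hx a ha, hy a ha, add_zero]
  have Pneg : ∀ {x}, P x → P (-x) := fun {x} hx a ha => by
    rw [mul_neg, hx a ha, neg_zero]
  have Pright : ∀ {x} (t : R), P x → P (x * t) := fun {x} t hx a ha => by
    rw [← mul_assoc, hx a ha, zero_mul]
  have Pleft : ∀ {x} (t : R), P x → P (t * x) := fun {x} t hx a ha => by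
    rw [← mul_assoc]
    exact hx (a * t) (hA a ha t)
  have Psum : ∀ {ι : Type} (s : Finset ι) (f : ι → R),
      (∀ i ∈ s, P (f i)) → P (∑ i ∈ s, f i) := by
    intro ι s f h a ha
    rw [Finset.mul_sum]
    exact Finset.sum_eq_zero fun i hi => h i hi a ha
  -- choose a nonzero annihilator element of minimal support size
  set S : Set ℕ := {n | ∃ t : R, t ≠ 0 ∧ P t ∧ (sup 𝒜 t).card = n} with hSdef
  have hSne : S.Nonempty := by
    obtain ⟨t, ht0, htP⟩ := hann
    exact ⟨(sup 𝒜 t).card, t, ht0, htP, rfl⟩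
  obtain ⟨t0, ht0ne, ht0P, ht0card⟩ := Nat.sInf_mem hSne
  set n0 : ℕ := sInf S with hn0
  have hmin : ∀ t : R, t ≠ 0 → P t → n0 ≤ (sup 𝒜 t).card := fun t h1 h2 =>
    Nat.sInf_le ⟨t, h1, h2, rfl⟩
  -- key minimality lemma
  have Kmin : ∀ (u : Fin k → ℕ) (r : R), r ∈ 𝒜 u → ∀ v ∈ sup 𝒜 t0,
      r * dC 𝒜 t0 v = 0 → r * t0 = 0 := by
    intro u r hr v hv hrv
    by_contra hne
    have hPrt : P (r * t0) := Pleft r ht0P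
    have hcard : n0 ≤ (sup 𝒜 (r * t0)).card := hmin _ hne hPrt
    have hsub : sup 𝒜 (r * t0) ⊆ ((sup 𝒜 t0).erase v).image (u + ·) := by
      intro w hw
      have hw' : dC 𝒜 (r * t0) w ≠ 0 := (mem_sup 𝒜).mp hw
      rw [dC_homog_mul 𝒜 hr t0 w] at hw'
      obtain ⟨v', hv'mem, hv'ne⟩ := Finset.exists_ne_zero_of_sum_ne_zero hw'
      by_cases h : u + v' = w
      · rw [if_pos h] at hv'ne
        have hv'v : v' ≠ v := by
          intro hvv; rw [hvv, hrv] at hv'ne; exact hv'ne rfl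
        refine Finset.mem_image.mpr ⟨v', Finset.mem_erase.mpr ⟨hv'v, hv'mem⟩, h⟩
      · rw [if_neg h] at hv'ne; exact absurd rfl hv'ne
    have hle : (sup 𝒜 (r * t0)).card ≤ ((sup 𝒜 t0).erase v).card :=
      le_trans (Finset.card_le_card hsub) (Finset.card_image_le)
    rw [Finset.card_erase_of_mem hv, ht0card] at hle
    have hpos : 0 < n0 := by
      rcases Nat.eq_zero_or_pos n0 with h0 | h
      · exfalso
        have : sup 𝒜 t0 = ∅ := Finset.card_eq_zero.mp (by rw [ht0card, h0])
        apply ht0ne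
        rw [← sum_sup 𝒜 t0, this, Finset.sum_empty]
      · exact h
    omega
  -- whole annihilation implies componentwise, for homogeneous r
  have Rcomp : ∀ (u : Fin k → ℕ) (r : R), r ∈ 𝒜 u → r * t0 = 0 →
      ∀ v, r * dC 𝒜 t0 v = 0 := by
    intro u r hr h0 v
    have := dC_homog_mul_add 𝒜 hr t0 v
    rw [h0, dC_zero] at this
    exact this.symm
  -- kill lemma by induction on support size
  have Kill : ∀ (n : ℕ) (b : R), (sup 𝒜 b).card ≤ n → b * t0 = 0 →
      ∀ u, dC 𝒜 b u * t0 = 0 := by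
    intro n
    induction n with
    | zero =>
      intro b hb _ u
      have hs : sup 𝒜 b = ∅ := Finset.card_eq_zero.mp (Nat.le_zero.mp hb)
      have hu : dC 𝒜 b u = 0 := by
        by_contra h
        exact Finset.notMem_empty u (hs ▸ (mem_sup 𝒜).mpr h)
      rw [hu, zero_mul]
    | succ n ih =>
      intro b hb hbt
      rcases Finset.eq_empty_or_nonempty (sup 𝒜 b) with hemp | hne
      · intro u
        have hu : dC 𝒜 b u = 0 := by
          by_contra h
          exact Finset.notMem_empty u (hemp ▸ (mem_sup 𝒜).mpr h)
        rw [hu, zero_mul]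
      · -- minimal elements of supports w.r.t. lex order
        obtain ⟨u1, hu1mem, hu1min⟩ :=
          Finset.exists_min_image (sup 𝒜 b) (toLex : (Fin k → ℕ) → Lex (Fin k → ℕ)) hne
        have ht0supne : (sup 𝒜 t0).Nonempty := by
          rcases Finset.eq_empty_or_nonempty (sup 𝒜 t0) with h | h
          · exfalso; apply ht0ne; rw [← sum_sup 𝒜 t0, h, Finset.sum_empty]
          · exact h
        obtain ⟨v1, hv1mem, hv1min⟩ :=
          Finset.exists_min_image (sup 𝒜 t0) (toLex : (Fin k → ℕ) → Lex (Fin k → ℕ)) ht0supne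
        -- step 1 : the bottom component of the product
        have step1 : dC 𝒜 b u1 * dC 𝒜 t0 v1 = 0 := by
          have h0 : dC 𝒜 (b * t0) (u1 + v1) = 0 := by rw [hbt, dC_zero]
          rw [dC_mul 𝒜 b t0 (u1 + v1)] at h0
          rw [Finset.sum_eq_single_of_mem u1 hu1mem] at h0
          · rw [Finset.sum_eq_single_of_mem v1 hv1mem] at h0
            · rwa [if_pos rfl] at h0
            · intro v hv hvne
              rw [if_neg]
              intro hc
              exact hvne (add_left_cancel hc)
          · intro x hx hxne
            apply Finset.sum_eq_zero
            intro v hv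
            rw [if_neg]
            intro hc
            -- lex argument : x + v = u1 + v1 with x ≠ u1 impossible
            have hx1 : toLex u1 < toLex x :=
              lt_of_le_of_ne (hu1min x hx) (fun h => hxne (toLex.injective h.symm))
            have hv1 : toLex v1 ≤ toLex v := hv1min v hv
            have : toLex u1 + toLex v1 < toLex x + toLex v :=
              add_lt_add_of_lt_of_le hx1 hv1
            rw [show toLex x + toLex v = toLex (x + v) from rfl,
              show toLex u1 + toLex v1 = toLex (u1 + v1) from rfl, hc] at this
            exact lt_irrefl _ this
        -- step 2 : the bottom component kills t0
        have step2 : dC 𝒜 b u1 * t0 = 0 :=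
          Kmin u1 (dC 𝒜 b u1) (dC_mem 𝒜 b u1) v1 hv1mem step1
        -- step 3 : induction on b - (component)
        set b' := b - dC 𝒜 b u1 with hb'
        have hb't : b' * t0 = 0 := by
          rw [hb', sub_mul, hbt, step2, sub_zero]
        have hdCb' : ∀ w, dC 𝒜 b' w = if w = u1 then 0 else dC 𝒜 b w := by
          intro w
          rw [hb', dC_sub, dC_of_mem 𝒜 (dC_mem 𝒜 b u1)]
          by_cases h : w = u1
          · rw [if_pos h, if_pos h.symm, h, sub_self]
          · rw [if_neg h, if_neg (fun hc => h hc.symm), sub_zero]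
        have hsub' : sup 𝒜 b' ⊆ (sup 𝒜 b).erase u1 := by
          intro w hw
          have hw' := (mem_sup 𝒜).mp hw
          rw [hdCb' w] at hw'
          by_cases h : w = u1
          · rw [if_pos h] at hw'; exact absurd rfl hw'
          · rw [if_neg h] at hw'
            exact Finset.mem_erase.mpr ⟨h, (mem_sup 𝒜).mpr hw'⟩
        have hcard' : (sup 𝒜 b').card ≤ n := by
          have h1 := Finset.card_le_card hsub'
          rw [Finset.card_erase_of_mem hu1mem] at h1
          omega
        have ihb' := ih b' hcard' hb't
        intro w
        by_cases h : w = u1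
        · rw [h]; exact step2
        · have := ihb' w
          rw [hdCb' w, if_neg h] at this
          exact this
  -- all components of t0 are in the annihilator
  have hcompP : ∀ v, P (dC 𝒜 t0 v) := by
    intro v a ha
    have haz : ∀ u, dC 𝒜 a u * t0 = 0 :=
      Kill (sup 𝒜 a).card a le_rfl (ht0P a ha)
    have : a * dC 𝒜 t0 v = ∑ u ∈ sup 𝒜 a, dC 𝒜 a u * dC 𝒜 t0 v := by
      rw [← Finset.sum_mul, sum_sup]
    rw [this]
    apply Finset.sum_eq_zero
    intro u _
    exact Rcomp u (dC 𝒜 a u) (dC_mem 𝒜 a u) (haz u) v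
  -- the graded ideal
  refine ⟨{ carrier := {z | ∀ v, P (dC 𝒜 z v)}
            zero_mem' := fun v => by rw [dC_zero]; exact Pzero
            add_mem' := fun {x y} hx hy v => by
              rw [dC_add]; exact Padd (hx v) (hy v)
            neg_mem' := fun {x} hx v => by
              rw [dC_neg]; exact Pneg (hx v) }, ?_, ?_, ?_, ?_⟩
  · -- two-sided ideal
    intro z hz t
    constructor
    · intro w
      rw [dC_mul 𝒜 z t w]
      refine Psum _ _ fun u _ => Psum _ _ fun v _ => ?_
      by_cases h : u + v = w
      · rw [if_pos h]; exact Pright (dC 𝒜 t v) (hz u)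
      · rw [if_neg h]; exact Pzero
    · intro w
      rw [dC_mul 𝒜 t z w]
      refine Psum _ _ fun u _ => Psum _ _ fun v _ => ?_
      by_cases h : u + v = w
      · rw [if_pos h]; exact Pleft (dC 𝒜 t u) (hz v)
      · rw [if_neg h]; exact Pzero
  · -- nontrivial
    obtain ⟨v0, hv0⟩ := exists_dC_ne_zero 𝒜 ht0ne
    intro hbot
    have hmem : dC 𝒜 t0 v0 ∈ ({z | ∀ v, P (dC 𝒜 z v)} : Set R) := by
      intro w
      rw [dC_of_mem 𝒜 (dC_mem 𝒜 t0 v0)]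
      by_cases h : v0 = w
      · rw [if_pos h]; exact hcompP v0
      · rw [if_neg h]; exact Pzero
    have : dC 𝒜 t0 v0 ∈ (⊥ : AddSubgroup R) := by
      rw [← hbot]; exact hmem
    exact hv0 (AddSubgroup.mem_bot.mp this)
  · -- contained in the annihilator
    intro z hz a ha
    have : a * z = ∑ v ∈ sup 𝒜 z, a * dC 𝒜 z v := by
      rw [← Finset.mul_sum, sum_sup]
    rw [this]
    exact Finset.sum_eq_zero fun v _ => hz v a ha
  · -- graded
    intro z hz v w
    show P (dC 𝒜 (dC 𝒜 z v) w)
    rw [dC_of_mem 𝒜 (dC_mem 𝒜 z v)]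
    by_cases h : v = w
    · rw [if_pos h]; exact hz v
    · rw [if_neg h]; exact Pzero
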